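/- arXiv:2603.24956 — 3 statements merged into one kernel-verified Lean document; each statement's English description precedes it below -/
import Mathlib

section
/- Fix reals $x_1, x_2 > 0$. If $(j_{1,\kappa}), (j_{2,\kappa})$ are sequences of positive integers with $2 j_{a,\kappa}/\kappa \to x_a$ ($a = 1,2$) as $\kappa \to \infty$, then $\frac{\pi}{\sqrt{x_1 x_2}} \cdot \frac{1}{4^{j_{1,\kappa}+j_{2,\kappa}-1}} \binom{2j_{1,\kappa}-1}{j_{1,\kappa}}\binom{2j_{2,\kappa}-1}{j_{2,\kappa}} \frac{j_{1,\kappa}\, j_{2,\kappa}}{j_{1,\kappa}+j_{2,\kappa}-1} \to \frac{1}{x_1+x_2}$ as $\kappa \to \infty$. -/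
open Filter Topology

private lemma alg_core (s1 s2 p q r f : ℝ) (hs1 : s1 ≠ 0) (hp : p ≠ 0) (hq : q ≠ 0) (hf : f ≠ 0)
    (h : r * r = 2 * (q * q)) :
    s2 * (2 * q * (f * p ^ 2)) / ((s1 * (r * p)) * (s1 * (r * p))) / f * q = s2 / s1 ^ 2 := by
  have hr : r ≠ 0 := by
    intro h0; rw [h0] at h; simp at h; rcases h with h | h <;> simp_all
  field_simp
  linear_combination (-1 : ℝ) * s2 * h

private lemma cb_stirling (n : ℕ) (hn : 1 ≤ n) :
    (Nat.centralBinom n : ℝ) / 4 ^ n * Real.sqrt n =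
      Stirling.stirlingSeq (2 * n) / (Stirling.stirlingSeq n) ^ 2 := by
  have hn0 : (0:ℝ) < n := by exact_mod_cast hn
  have hfac : ∀ m : ℕ, 1 ≤ m → ((Nat.factorial m : ℝ)) =
      Stirling.stirlingSeq m * (Real.sqrt (2 * m) * ((m : ℝ) / Real.exp 1) ^ m) := by
    intro m hm
    have hm0 : (0:ℝ) < m := by exact_mod_cast hm
    have hden : (0:ℝ) < Real.sqrt (2 * m) * ((m : ℝ) / Real.exp 1) ^ m := by positivity
    rw [Stirling.stirlingSeq, div_mul_cancel₀]
    exact ne_of_gt hden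
  have hsub : 2 * n - n = n := by omega
  have hcb : (Nat.centralBinom n : ℝ) =
      (Nat.factorial (2 * n)) / (Nat.factorial n * Nat.factorial n) := by
    rw [Nat.centralBinom, Nat.cast_choose ℝ (by omega : n ≤ 2 * n), hsub]
  rw [hcb, hfac (2 * n) (by omega), hfac n hn]
  have h1 : Real.sqrt (2 * ((2 * n : ℕ) : ℝ)) = 2 * Real.sqrt n := by
    push_cast
    rw [show (2 : ℝ) * (2 * n) = 2 ^ 2 * n by ring,
      Real.sqrt_mul (by positivity), Real.sqrt_sq (by norm_num)]
  have h2 : (((2 * n : ℕ) : ℝ) / Real.exp 1) ^ (2 * n) =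
      4 ^ n * (((n : ℝ) / Real.exp 1) ^ n) ^ 2 := by
    push_cast
    rw [show (2 * (n:ℝ)) / Real.exp 1 = 2 * ((n:ℝ)/Real.exp 1) by ring, mul_pow,
      show (2:ℝ) ^ (2 * n) = 4 ^ n by rw [pow_mul]; norm_num, mul_comm 2 n, pow_mul]
  rw [h1, h2]
  have hspos : 0 < Stirling.stirlingSeq n := by
    have := Stirling.stirlingSeq'_pos (n - 1)
    rwa [Nat.sub_add_cancel hn] at this
  exact alg_core _ _ _ _ _ _ (ne_of_gt hspos)
    (by positivity) (by positivity) (by positivity)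
    (by rw [Real.mul_self_sqrt (by positivity), Real.mul_self_sqrt hn0.le])

/-- `centralBinom n / 4^n * sqrt (π n) → 1`. -/
private lemma cb_tendsto :
    Tendsto (fun n : ℕ => (Nat.centralBinom n : ℝ) / 4 ^ n * Real.sqrt (Real.pi * n))
      atTop (𝓝 1) := by
  have hpi : (0:ℝ) < Real.pi := Real.pi_pos
  have h2 : Tendsto (fun n : ℕ => 2 * n) atTop atTop :=
    tendsto_atTop_atTop_of_monotone (fun a b h => by omega) (fun b => ⟨b, by omega⟩)
  have hs2 : Tendsto (fun n : ℕ => Stirling.stirlingSeq (2 * n)) atTop (𝓝 (Real.sqrt Real.pi)) :=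
    Stirling.tendsto_stirlingSeq_sqrt_pi.comp h2
  have hs1 : Tendsto (fun n : ℕ => (Stirling.stirlingSeq n) ^ 2) atTop
      (𝓝 (Real.sqrt Real.pi ^ 2)) := Stirling.tendsto_stirlingSeq_sqrt_pi.pow 2
  have hlim : Tendsto (fun n : ℕ =>
      Real.sqrt Real.pi * (Stirling.stirlingSeq (2 * n) / (Stirling.stirlingSeq n) ^ 2))
      atTop (𝓝 1) := by
    have := (hs2.div hs1 (by
      rw [Real.sq_sqrt hpi.le]; exact ne_of_gt hpi)).const_mul (Real.sqrt Real.pi)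
    simp only [Pi.div_apply] at this
    convert this using 2
    rw [Real.sq_sqrt hpi.le, eq_comm, mul_div_assoc', Real.mul_self_sqrt hpi.le,
      div_self (ne_of_gt hpi)]
  refine hlim.congr' ?_
  filter_upwards [eventually_ge_atTop 1] with n hn
  rw [← cb_stirling n hn, Real.sqrt_mul hpi.le]
  ring

private lemma choose_odd_eq (j : ℕ) (hj : 1 ≤ j) :
    ((Nat.choose (2 * j - 1) j : ℕ) : ℝ) = (Nat.centralBinom j : ℝ) / 2 := by
  obtain ⟨m, rfl⟩ := Nat.exists_eq_add_of_le hj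
  have h1 : 2 * (1 + m) - 1 = 2 * m + 1 := by omega
  have h2 : Nat.centralBinom (1 + m) = 2 * Nat.choose (2 * m + 1) (1 + m) := by
    rw [Nat.centralBinom, show 2 * (1 + m) = (2 * m + 1) + 1 by omega,
      show 1 + m = m + 1 by omega, Nat.choose_succ_succ,
      ← Nat.choose_symm (show m + 1 ≤ 2 * m + 1 by omega),
      show 2 * m + 1 - (m + 1) = m by omega]
    omega
  rw [h1, h2]
  push_cast
  ring

/-- Okounkov's limit formula for `(g,n) = (0,2)` with two odd faces:
the rescaled Harer–Zagier two-point planar correlator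
`Map_0(2j₁-1,2j₂-1) = C(2j₁-1,j₁) C(2j₂-1,j₂) j₁j₂/(j₁+j₂-1)` converges to
`Q_0(x₁,x₂) = 1/(x₁+x₂)`. -/
theorem okounkov_limit_g0_n2_odd (x₁ x₂ : ℝ) (hx₁ : 0 < x₁) (hx₂ : 0 < x₂)
    (j₁ j₂ : ℕ → ℕ) (hj₁pos : ∀ κ, 0 < j₁ κ) (hj₂pos : ∀ κ, 0 < j₂ κ)
    (hj₁ : Tendsto (fun κ : ℕ => (2 * j₁ κ : ℝ) / κ) atTop (𝓝 x₁))
    (hj₂ : Tendsto (fun κ : ℕ => (2 * j₂ κ : ℝ) / κ) atTop (𝓝 x₂)) :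
    Tendsto (fun κ : ℕ =>
      Real.pi / Real.sqrt (x₁ * x₂) *
        ((Nat.choose (2 * j₁ κ - 1) (j₁ κ) : ℝ) *
          (Nat.choose (2 * j₂ κ - 1) (j₂ κ) : ℝ) *
          ((j₁ κ : ℝ) * (j₂ κ : ℝ) / ((j₁ κ : ℝ) + (j₂ κ : ℝ) - 1)) /
            4 ^ (j₁ κ + j₂ κ - 1)))
      atTop (𝓝 (1 / (x₁ + x₂))) := by
  have hpi := Real.pi_pos
  have hsx : 0 < Real.sqrt (x₁ * x₂) := Real.sqrt_pos.mpr (by positivity)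
  -- j₁, j₂ tend to infinity
  have htop : ∀ (j : ℕ → ℕ) (x : ℝ), 0 < x →
      Tendsto (fun κ : ℕ => (2 * j κ : ℝ) / κ) atTop (𝓝 x) → Tendsto j atTop atTop := by
    intro j x hx hjx
    have hev : ∀ᶠ κ : ℕ in atTop, x / 2 < (2 * j κ : ℝ) / κ :=
      hjx.eventually (eventually_gt_nhds (by linarith))
    rw [← tendsto_natCast_atTop_iff (R := ℝ)]
    apply tendsto_atTop_mono' _ _ (tendsto_natCast_atTop_atTop.atTop_mul_const
      (show (0:ℝ) < x / 4 by linarith))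
    filter_upwards [hev, eventually_ge_atTop 1] with κ h1 h2
    have hκ : (0:ℝ) < κ := by exact_mod_cast h2
    rw [div_lt_div_iff₀ (by norm_num) hκ] at h1
    nlinarith
  have hj1top := htop j₁ x₁ hx₁ hj₁
  have hj2top := htop j₂ x₂ hx₂ hj₂
  -- the two Stirling factors
  have hA1 : Tendsto (fun κ => (Nat.centralBinom (j₁ κ) : ℝ) / 4 ^ (j₁ κ) *
      Real.sqrt (Real.pi * j₁ κ)) atTop (𝓝 1) := cb_tendsto.comp hj1top
  have hA2 : Tendsto (fun κ => (Nat.centralBinom (j₂ κ) : ℝ) / 4 ^ (j₂ κ) *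
      Real.sqrt (Real.pi * j₂ κ)) atTop (𝓝 1) := cb_tendsto.comp hj2top
  -- sqrt(j₁ j₂)/κ → sqrt(x₁ x₂)/2
  have hsqrtdiv : Tendsto (fun κ : ℕ => Real.sqrt ((j₁ κ : ℝ) * j₂ κ) / κ) atTop
      (𝓝 (Real.sqrt (x₁ * x₂) / 2)) := by
    have hprod : Tendsto (fun κ : ℕ => ((2 * j₁ κ : ℝ) / κ) * ((2 * j₂ κ : ℝ) / κ)) atTop
        (𝓝 (x₁ * x₂)) := hj₁.mul hj₂
    have := ((Real.continuous_sqrt.tendsto (x₁ * x₂)).comp hprod).div_const 2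
    refine this.congr fun κ => ?_
    have h : ((2 * j₁ κ : ℝ) / κ) * ((2 * j₂ κ : ℝ) / κ) =
        ((2 : ℝ) / κ) ^ 2 * ((j₁ κ : ℝ) * j₂ κ) := by ring
    simp only [Function.comp]
    rw [h, Real.sqrt_mul (sq_nonneg _), Real.sqrt_sq (by positivity)]
    ring
  -- (j₁+j₂-1)/κ → (x₁+x₂)/2
  have hddiv : Tendsto (fun κ : ℕ => ((j₁ κ : ℝ) + j₂ κ - 1) / κ) atTop
      (𝓝 ((x₁ + x₂) / 2)) := by
    have h0 : Tendsto (fun κ : ℕ => (1 : ℝ) / κ) atTop (𝓝 0) :=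
      tendsto_one_div_atTop_nhds_zero_nat
    have := ((hj₁.add hj₂).div_const 2).sub h0
    rw [show (x₁ + x₂) / 2 - 0 = (x₁ + x₂) / 2 by ring] at this
    refine this.congr fun κ => ?_
    ring
  -- the geometric factor
  have hG : Tendsto (fun κ : ℕ => Real.sqrt ((j₁ κ : ℝ) * j₂ κ) /
      (Real.sqrt (x₁ * x₂) * ((j₁ κ : ℝ) + j₂ κ - 1))) atTop (𝓝 (1 / (x₁ + x₂))) := by
    have hlim := hsqrtdiv.div (hddiv.const_mul (Real.sqrt (x₁ * x₂)))
      (by positivity : Real.sqrt (x₁ * x₂) * ((x₁ + x₂) / 2) ≠ 0)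
    have heq : Real.sqrt (x₁ * x₂) / 2 / (Real.sqrt (x₁ * x₂) * ((x₁ + x₂) / 2)) =
        1 / (x₁ + x₂) := by
      field_simp
    rw [heq] at hlim
    refine hlim.congr' ?_
    filter_upwards [eventually_ge_atTop 1] with κ hκ1
    have hκ : ((κ : ℝ)) ≠ 0 := by positivity
    have hd : ((j₁ κ : ℝ) + j₂ κ - 1) ≠ 0 := by
      have h1 : (1:ℝ) ≤ j₁ κ := by exact_mod_cast hj₁pos κ
      have h2 : (1:ℝ) ≤ j₂ κ := by exact_mod_cast hj₂pos κ
      nlinarith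
    simp only [Pi.div_apply]
    field_simp
  -- combine
  have hfinal := (hA1.mul hA2).mul hG
  rw [one_mul, one_mul] at hfinal
  refine hfinal.congr fun κ => ?_
  -- pointwise algebraic identity
  have h1 : 1 ≤ j₁ κ := hj₁pos κ
  have h2 : 1 ≤ j₂ κ := hj₂pos κ
  rw [choose_odd_eq _ h1, choose_odd_eq _ h2]
  have h4 : (4:ℝ) ^ (j₁ κ + j₂ κ - 1) = 4 ^ (j₁ κ) * 4 ^ (j₂ κ) / 4 := by
    rw [eq_div_iff (by norm_num), ← pow_succ, Nat.sub_add_cancel (by omega), pow_add]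
  have hj1R : (0:ℝ) < j₁ κ := by exact_mod_cast h1
  have hj2R : (0:ℝ) < j₂ κ := by exact_mod_cast h2
  have hkey : Real.sqrt (Real.pi * j₁ κ) * Real.sqrt (Real.pi * j₂ κ) *
      Real.sqrt ((j₁ κ : ℝ) * j₂ κ) = Real.pi * ((j₁ κ : ℝ) * j₂ κ) := by
    rw [← Real.sqrt_mul (by positivity), show Real.pi * j₁ κ * (Real.pi * j₂ κ) =
      Real.pi ^ 2 * ((j₁ κ : ℝ) * j₂ κ) by ring, Real.sqrt_mul (sq_nonneg _),
      Real.sqrt_sq hpi.le, mul_assoc, Real.mul_self_sqrt (by positivity)]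
  have hj1R' : (1:ℝ) ≤ j₁ κ := by exact_mod_cast h1
  have hj2R' : (1:ℝ) ≤ j₂ κ := by exact_mod_cast h2
  have hd : ((j₁ κ : ℝ) + j₂ κ - 1) ≠ 0 := by intro h0; linarith
  rw [h4]
  have h41 : (4:ℝ) ^ (j₁ κ) ≠ 0 := by positivity
  have h42 : (4:ℝ) ^ (j₂ κ) ≠ 0 := by positivity
  set c1 := (Nat.centralBinom (j₁ κ) : ℝ) with hc1
  set c2 := (Nat.centralBinom (j₂ κ) : ℝ) with hc2
  set S1 := Real.sqrt (Real.pi * j₁ κ) with hS1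
  set S2 := Real.sqrt (Real.pi * j₂ κ) with hS2
  set S := Real.sqrt ((j₁ κ : ℝ) * j₂ κ) with hS
  set sx := Real.sqrt (x₁ * x₂) with hsxdef
  have hsx' : sx ≠ 0 := ne_of_gt hsx
  field_simp
  linear_combination (4 * c1 * c2) * hkey
end

section
/- Let $A = \mathbb{Z}[v_i, w_i : i \in \mathbb{Z}]$ with shift automorphism $\Lambda(v_i) = v_{i+1}$, $\Lambda(w_i) = w_{i+1}$, and let $U(\lambda) = \begin{pmatrix} v_0 - \lambda & w_0 \\ -1 & 0\end{pmatrix}$ over the ring $A[[\lambda^{-1}]][\lambda]$. Then there exists a unique $2\times 2$ matrix $R(\lambda) = \begin{pmatrix}1 & 0\\ 0 & 0\end{pmatrix} + O(\lambda^{-1})$ with entries in $A[[\lambda^{-1}]]$ satisfying $\Lambda(R(\lambda))\, U(\lambda) - U(\lambda)\, R(\lambda) = 0$, $\operatorname{tr} R(\lambda) = 1$, and $\det R(\lambda) = 0$, where $\Lambda$ acts entrywise on matrices and coefficientwise on power series in $\lambda^{-1}$. -/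
open scoped Matrix

/-- The ring `A = ℤ[v_i, w_i : i ∈ ℤ]`: variables indexed by `ℤ ⊕ ℤ`
(`Sum.inl i ↦ v_i`, `Sum.inr i ↦ w_i`). -/
abbrev TodaRing := MvPolynomial (ℤ ⊕ ℤ) ℤ

/-- The shift `Λ : v_i ↦ v_{i+1}, w_i ↦ w_{i+1}`. -/
noncomputable def todaShift : TodaRing →+* TodaRing :=
  (MvPolynomial.rename (Sum.map (· + 1) (· + 1))).toRingHom

/-- `Λ` acting entrywise on `2×2` matrices of power series in `λ⁻¹`
(coefficientwise on each power series). -/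
noncomputable def todaShiftMat (R : Matrix (Fin 2) (Fin 2) (PowerSeries TodaRing)) :
    Matrix (Fin 2) (Fin 2) (PowerSeries TodaRing) :=
  R.map (PowerSeries.map todaShift)

/-- The `λ`-free part `V = [[v₀, w₀], [-1, 0]]` of `U(λ) = V - λE`. -/
noncomputable def todaV : Matrix (Fin 2) (Fin 2) (PowerSeries TodaRing) :=
  !![PowerSeries.C (MvPolynomial.X (Sum.inl 0)),
      PowerSeries.C (MvPolynomial.X (Sum.inr 0));
    -1, 0]

/-- The matrix `E = [[1,0],[0,0]]`, so that `U(λ) = V - λE`. -/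
noncomputable def todaE : Matrix (Fin 2) (Fin 2) (PowerSeries TodaRing) :=
  !![1, 0; 0, 0]


namespace TodaAux
open PowerSeries Finset

noncomputable def Λ : TodaRing →+* TodaRing := todaShift
noncomputable def Λi : TodaRing →+* TodaRing :=
  (MvPolynomial.rename (Sum.map (· - 1) (· - 1))).toRingHom

lemma Λ_Λi (x : TodaRing) : Λ (Λi x) = x := by
  show (MvPolynomial.rename _) ((MvPolynomial.rename _) x) = x
  rw [MvPolynomial.rename_rename]
  have : (Sum.map (· + 1) (· + 1) ∘ Sum.map (· - 1 : ℤ → ℤ) (· - 1 : ℤ → ℤ)) = id := by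
    funext y; cases y <;> simp
  rw [this, MvPolynomial.rename_id, AlgHom.id_apply]

lemma Λi_Λ (x : TodaRing) : Λi (Λ x) = x := by
  show (MvPolynomial.rename _) ((MvPolynomial.rename _) x) = x
  rw [MvPolynomial.rename_rename]
  have : (Sum.map (· - 1) (· - 1) ∘ Sum.map (· + 1 : ℤ → ℤ) (· + 1 : ℤ → ℤ)) = id := by
    funext y; cases y <;> simp
  rw [this, MvPolynomial.rename_id, AlgHom.id_apply]

lemma Λ_inj : Function.Injective Λ := Function.LeftInverse.injective Λi_Λ

noncomputable def v : TodaRing := MvPolynomial.X (Sum.inl 0)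
noncomputable def w : TodaRing := MvPolynomial.X (Sum.inr 0)

/-- `(a_n, c_n)` -/
noncomputable def ac : ℕ → TodaRing × TodaRing
  | 0 => (1, 0)
  | n+1 =>
    (-(∑ i ∈ (Finset.range n).attach, ((-(w * Λ (ac (i.1+1)).2)) * (ac (n-i.1)).2 + (ac (i.1+1)).1 * (ac (n-i.1)).1)),
     Λi v * (ac n).2 - (if n = 0 then 0 else -(ac n).1) + Λi (ac n).1)
termination_by n => n
decreasing_by all_goals (try have := Finset.mem_range.mp i.2) <;> omega

noncomputable def aC (n : ℕ) : TodaRing := (ac n).1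
noncomputable def cC (n : ℕ) : TodaRing := (ac n).2
noncomputable def bC (n : ℕ) : TodaRing := -(w * Λ (cC n))
noncomputable def dC (n : ℕ) : TodaRing := if n = 0 then 0 else -(aC n)

lemma aC_zero : aC 0 = 1 := by rw [aC, ac]
lemma cC_zero : cC 0 = 0 := by rw [cC, ac]
lemma bC_zero : bC 0 = 0 := by simp [bC, cC_zero, Λ]
lemma dC_zero : dC 0 = 0 := by rw [dC]; simp

lemma cC_succ (n : ℕ) : cC (n+1) = Λi v * cC n - dC n + Λi (aC n) := by
  rw [cC, ac]; rfl

lemma aC_succ (n : ℕ) :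
    aC (n+1) = -(∑ i ∈ Finset.range n, (bC (i+1) * cC (n-i) + aC (i+1) * aC (n-i))) := by
  rw [aC, ac]
  show -∑ i ∈ (Finset.range n).attach, _ = _
  simp only [bC, cC, aC]
  rw [← Finset.sum_attach (Finset.range n)
    (fun i => -(w * Λ (ac (i+1)).2) * (ac (n-i)).2 + (ac (i+1)).1 * (ac (n-i)).1)]



noncomputable def M : PowerSeries TodaRing →+* PowerSeries TodaRing := PowerSeries.map Λ

lemma coeff_M (n : ℕ) (f : PowerSeries TodaRing) : coeff n (M f) = Λ (coeff n f) :=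
  PowerSeries.coeff_map Λ n f

noncomputable def sa : PowerSeries TodaRing := PowerSeries.mk aC
noncomputable def sb : PowerSeries TodaRing := PowerSeries.mk bC
noncomputable def sc : PowerSeries TodaRing := PowerSeries.mk cC
noncomputable def sd : PowerSeries TodaRing := PowerSeries.mk dC
noncomputable def sv : PowerSeries TodaRing := PowerSeries.C v
noncomputable def sw : PowerSeries TodaRing := PowerSeries.C w

lemma hT : sa + sd = 1 := by
  ext n : 1
  simp only [map_add, sa, sd, coeff_mk, coeff_one]
  cases n with
  | zero => simp [aC_zero, dC_zero]
  | succ m => simp [dC]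

lemma hTM : M sa + M sd = 1 := by rw [← map_add, hT, map_one]

lemma hC : M sc = PowerSeries.X * (sv * M sc - M sd + sa) := by
  ext n : 1
  cases n with
  | zero => rw [PowerSeries.coeff_zero_X_mul, coeff_M]; simp [sc, cC_zero]
  | succ m =>
    rw [coeff_succ_X_mul, coeff_M]
    show Λ (coeff (m+1) (PowerSeries.mk cC)) = _
    rw [coeff_mk, cC_succ]
    simp only [map_add, map_sub, map_mul, coeff_M, sv, sa, sd, sc, coeff_C_mul, coeff_mk, Λ_Λi]
    try ring

lemma hB : sb = -(sw * M sc) := by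
  ext n : 1
  simp [sb, sw, sc, coeff_mk, coeff_M, bC]

lemma antidiag_split (x y : ℕ → TodaRing) (m : ℕ) :
    ∑ p ∈ Finset.HasAntidiagonal.antidiagonal (m+1), x p.1 * y p.2
      = x 0 * y (m+1) + x (m+1) * y 0 + ∑ k ∈ Finset.range m, x (k+1) * y (m-k) := by
  rw [Finset.Nat.sum_antidiagonal_eq_sum_range_succ_mk, Finset.sum_range_succ',
    Finset.sum_range_succ]
  simp only [Nat.succ_sub_succ, Nat.sub_self, Nat.sub_zero]
  ring

lemma hD : sa * sd = sb * sc := by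
  ext n : 1
  rw [coeff_mul, coeff_mul]
  simp only [sa, sb, sc, sd, coeff_mk]
  cases n with
  | zero => simp [aC_zero, dC_zero, bC_zero, cC_zero]
  | succ m =>
    rw [antidiag_split aC dC m, antidiag_split bC cC m]
    have hsum : ∑ k ∈ Finset.range m, aC (k+1) * dC (m-k)
        = ∑ k ∈ Finset.range m, -(aC (k+1) * aC (m-k)) := by
      refine Finset.sum_congr rfl (fun k hk => ?_)
      have := Finset.mem_range.mp hk
      rw [dC, if_neg (by omega)]
      ring
    rw [hsum, aC_zero, dC_zero, bC_zero, cC_zero,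
      show dC (m+1) = -(aC (m+1)) from by rw [dC, if_neg (by omega)], aC_succ m,
      Finset.sum_add_distrib, Finset.sum_neg_distrib]
    ring

lemma hDM : M sa * M sd = M sb * M sc := by
  have := congrArg M hD
  simpa only [map_mul] using this

lemma h2 : sb = -(PowerSeries.X * (sw * M sa - sv * sb - sw * sd)) := by
  linear_combination (1 - PowerSeries.X * sv) * hB - sw * hC + (PowerSeries.X * sw) * hTM
    - (PowerSeries.X * sw) * hT

lemma constCoeff_sa : PowerSeries.constantCoeff sa = 1 := by
  rw [← PowerSeries.coeff_zero_eq_constantCoeff_apply]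
  simp [sa, aC_zero]

lemma constCoeff_Msa : PowerSeries.constantCoeff (M sa) = 1 := by
  rw [← PowerSeries.coeff_zero_eq_constantCoeff_apply, coeff_M]
  simp [sa, aC_zero]

lemma h11 : M sa - sa = PowerSeries.X * (sv * (M sa - sa) - M sb - sw * sc) := by
  have hd' : sd = 1 - sa := by linear_combination hT
  have hmd' : M sd = 1 - M sa := by linear_combination hTM
  have hC' := hC; have h2' := h2; have hD' := hD; have hDM' := hDM
  rw [hmd'] at hC' hDM'
  rw [hd'] at h2' hD'
  have hS : (1 - M sa - sa) * ((M sa - sa) - PowerSeries.X * (sv * (M sa - sa) - M sb - sw * sc)) = 0 := by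
    linear_combination (M sb) * hC' - sc * h2' + (1 - PowerSeries.X * sv) * hDM'
      - (1 - PowerSeries.X * sv) * hD'
  have hSne : (1 - M sa - sa) ≠ 0 := by
    intro h
    have := congrArg (PowerSeries.constantCoeff) h
    rw [map_sub, map_sub, map_one, constCoeff_sa, constCoeff_Msa, map_zero] at this
    norm_num at this
  rcases mul_eq_zero.mp hS with h | h
  · exact absurd h hSne
  · linear_combination h



lemma constCoeff_sb : PowerSeries.constantCoeff sb = 0 := by
  rw [← PowerSeries.coeff_zero_eq_constantCoeff_apply]
  simpa [sb] using bC_zero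

lemma constCoeff_sc : PowerSeries.constantCoeff sc = 0 := by
  rw [← PowerSeries.coeff_zero_eq_constantCoeff_apply]
  simpa [sc] using cC_zero

lemma constCoeff_sd : PowerSeries.constantCoeff sd = 0 := by
  rw [← PowerSeries.coeff_zero_eq_constantCoeff_apply]
  simpa [sd] using dC_zero


lemma todaV_eq : todaV = !![sv, sw; -1, 0] := rfl

noncomputable def R0 : Matrix (Fin 2) (Fin 2) (PowerSeries TodaRing) := !![sa, sb; sc, sd]

lemma M_eq (f : PowerSeries TodaRing) : PowerSeries.map todaShift f = M f := rfl

lemma R0_eq : todaShiftMat R0 * todaE - todaE * R0 =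
    (PowerSeries.X : PowerSeries TodaRing) • (todaShiftMat R0 * todaV - todaV * R0) := by
  refine Matrix.ext (fun i j => ?_)
  fin_cases i <;> fin_cases j <;>
    simp [todaShiftMat, todaV_eq, todaE, R0, Matrix.mul_apply, Fin.sum_univ_two, M_eq, smul_eq_mul]
  · linear_combination h11
  · linear_combination -h2
  · linear_combination hC
  · linear_combination hB


lemma R0_map : R0.map (PowerSeries.constantCoeff) = !![1, 0; 0, 0] := by
  refine Matrix.ext (fun i j => ?_)
  fin_cases i <;> fin_cases j <;>
    simp [R0, Matrix.map_apply, constCoeff_sa, constCoeff_sb, constCoeff_sc, constCoeff_sd]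

lemma R0_trace : Matrix.trace R0 = 1 := by
  rw [Matrix.trace_fin_two]
  show sa + sd = 1
  exact hT

lemma R0_det : R0.det = 0 := by
  rw [Matrix.det_fin_two]
  show sa * sd - sb * sc = 0
  linear_combination hD

lemma X_ne : (PowerSeries.X : PowerSeries TodaRing) ≠ 0 := PowerSeries.X_ne_zero

lemma unique (R' : Matrix (Fin 2) (Fin 2) (PowerSeries TodaRing))
    (hmap : R'.map (PowerSeries.constantCoeff) = !![1, 0; 0, 0])
    (heq : todaShiftMat R' * todaE - todaE * R' =
      (PowerSeries.X : PowerSeries TodaRing) • (todaShiftMat R' * todaV - todaV * R'))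
    (htr : Matrix.trace R' = 1) (hdet : Matrix.det R' = 0) : R' = R0 := by
  set a' := R' 0 0 with ha'
  set b' := R' 0 1 with hb'
  set c' := R' 1 0 with hc'
  set d' := R' 1 1 with hd'
  -- entry (1,0) of the matrix equation
  have e10 : M c' = PowerSeries.X * (sv * M c' - M d' + a') := by
    have h := congrFun (congrFun heq 1) 0
    simp [todaShiftMat, todaV_eq, todaE, Matrix.mul_apply, Matrix.vecMul, dotProduct,
      Fin.sum_univ_two, M_eq, smul_eq_mul, sv] at h
    simp only [sv]
    linear_combination h
  -- entry (1,1) of the matrix equation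
  have e11 : b' = -(sw * M c') := by
    have h := congrFun (congrFun heq 1) 1
    simp [todaShiftMat, todaV_eq, todaE, Matrix.mul_apply, Matrix.vecMul, dotProduct,
      Fin.sum_univ_two, M_eq, smul_eq_mul, sw] at h
    simp only [sw]
    linear_combination h
  have etr : a' + d' = 1 := by
    rw [Matrix.trace_fin_two] at htr
    exact htr
  have edet : a' * d' = b' * c' := by
    rw [Matrix.det_fin_two] at hdet
    linear_combination hdet
  have c0 : ∀ i j, PowerSeries.constantCoeff (R' i j) = !![(1 : TodaRing), 0; 0, 0] i j := by
    intro i j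
    rw [← hmap]
    simp [Matrix.map_apply]
  -- the coefficientwise induction
  have key : ∀ n : ℕ, coeff n a' = aC n ∧ coeff n b' = bC n ∧
      coeff n c' = cC n ∧ coeff n d' = dC n := by
    intro n
    induction n using Nat.strong_induction_on with
    | _ n IH =>
      match n with
      | 0 =>
        refine ⟨?_, ?_, ?_, ?_⟩ <;>
          rw [PowerSeries.coeff_zero_eq_constantCoeff_apply] <;>
          first
            | (rw [aC_zero]; simpa using c0 0 0)
            | (rw [bC_zero]; simpa using c0 0 1)
            | (rw [cC_zero]; simpa using c0 1 0)
            | (rw [dC_zero]; simpa using c0 1 1)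
      | m + 1 =>
        obtain ⟨iha, ihb, ihc, ihd⟩ := IH m (by omega)
        have hcm : coeff (m+1) c' = cC (m+1) := by
          have h := congrArg (coeff (m+1)) e10
          rw [coeff_succ_X_mul, coeff_M] at h
          rw [map_add, map_sub] at h
          rw [show coeff m (sv * M c') = v * Λ (coeff m c') from by
              rw [sv, coeff_C_mul, coeff_M], coeff_M, ihc, ihd] at h
          apply Λ_inj
          rw [h, cC_succ]
          rw [map_add, map_sub, map_mul, Λ_Λi, Λ_Λi, iha]
        have hbm : coeff (m+1) b' = bC (m+1) := by
          have h := congrArg (coeff (m+1)) e11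
          rw [map_neg] at h
          rw [show coeff (m+1) (sw * M c') = w * Λ (coeff (m+1) c') from by
              rw [sw, coeff_C_mul, coeff_M], hcm] at h
          rw [h, bC]
        have ham : coeff (m+1) a' = aC (m+1) := by
          have h := congrArg (coeff (m+1)) edet
          rw [coeff_mul, coeff_mul, antidiag_split (fun k => coeff k a')
            (fun k => coeff k d'), antidiag_split (fun k => coeff k b')
            (fun k => coeff k c')] at h
          have hz : ∀ i j, coeff 0 (R' i j) = !![(1 : TodaRing), 0; 0, 0] i j := by
            intro i j
            rw [PowerSeries.coeff_zero_eq_constantCoeff_apply]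
            exact c0 i j
          have hdm1 : coeff (m+1) d' = -(coeff (m+1) a') := by
            have := congrArg (coeff (m+1)) etr
            rw [map_add, coeff_one, if_neg (by omega)] at this
            linear_combination this
          rw [show coeff 0 a' = 1 from by simpa using hz 0 0,
            show coeff 0 b' = 0 from by simpa using hz 0 1,
            show coeff 0 c' = 0 from by simpa using hz 1 0,
            show coeff 0 d' = 0 from by simpa using hz 1 1, hdm1] at h
          have hsums : ∀ k ∈ Finset.range m,
              coeff (k+1) a' * coeff (m-k) d'
                = -(aC (k+1) * aC (m-k)) := by
            intro k hk
            have hk' := Finset.mem_range.mp hk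
            obtain ⟨ia, _, _, id'⟩ := IH (k+1) (by omega)
            obtain ⟨ja, _, _, jd⟩ := IH (m-k) (by omega)
            rw [ia, jd, dC, if_neg (by omega)]
            ring
          have hsums2 : ∀ k ∈ Finset.range m,
              coeff (k+1) b' * coeff (m-k) c'
                = bC (k+1) * cC (m-k) := by
            intro k hk
            have hk' := Finset.mem_range.mp hk
            obtain ⟨_, ib, _, _⟩ := IH (k+1) (by omega)
            obtain ⟨_, _, jc, _⟩ := IH (m-k) (by omega)
            rw [ib, jc]
          rw [Finset.sum_congr rfl hsums, Finset.sum_congr rfl hsums2] at h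
          rw [aC_succ m, Finset.sum_add_distrib]
          rw [Finset.sum_neg_distrib] at h
          linear_combination -h
        have hdm : coeff (m+1) d' = dC (m+1) := by
          have := congrArg (coeff (m+1)) etr
          rw [map_add, coeff_one, if_neg (by omega), ham] at this
          rw [dC, if_neg (by omega)]
          linear_combination this
        exact ⟨ham, hbm, hcm, hdm⟩
  refine Matrix.ext (fun i j => ?_)
  fin_cases i <;> fin_cases j
  · ext n : 1
    simpa [R0, sa] using (key n).1
  · ext n : 1
    simpa [R0, sb] using (key n).2.1
  · ext n : 1
    simpa [R0, sc] using (key n).2.2.1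
  · ext n : 1
    simpa [R0, sd] using (key n).2.2.2

end TodaAux

/-- Existence and uniqueness of the basic matrix resolvent for the Toda lattice:
there is a unique `2×2` matrix `R(λ)` with entries in `A[[λ⁻¹]]` whose `λ⁰` coefficient
is `diag(1,0)`, satisfying `Λ(R(λ)) U(λ) - U(λ) R(λ) = 0` (with `U(λ) = V - λE`;
multiplying through by `λ⁻¹` this reads `Λ(R)E - ER = λ⁻¹ (Λ(R)V - VR)`, where `λ⁻¹`
is the power series variable), `tr R(λ) = 1` and `det R(λ) = 0`. -/
theorem toda_matrix_resolvent_exists_unique :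
    ∃! R : Matrix (Fin 2) (Fin 2) (PowerSeries TodaRing),
      R.map (PowerSeries.constantCoeff) = !![1, 0; 0, 0] ∧
      todaShiftMat R * todaE - todaE * R =
        (PowerSeries.X : PowerSeries TodaRing) • (todaShiftMat R * todaV - todaV * R) ∧
      Matrix.trace R = 1 ∧
      Matrix.det R = 0 := by
  refine ⟨TodaAux.R0, ⟨TodaAux.R0_map, TodaAux.R0_eq, TodaAux.R0_trace, TodaAux.R0_det⟩, ?_⟩
  rintro R' ⟨h1, h2, h3, h4⟩
  exact TodaAux.unique R' h1 h2 h3 h4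
end

section
/- For every $g \ge 0$ and $n \ge 0$ and positive integers $i_1, \dots, i_n$, the dilaton-type relation $\mathrm{Map}_g(2, i_1, \dots, i_n) = (i_1 + \cdots + i_n)\,\mathrm{Map}_g(i_1,\dots,i_n) + \delta_{g,0}\,\delta_{n,0}$ holds, where $\mathrm{Map}_g(i_1,\dots,i_n)$ is the number of maps (embedded graphs) on a closed oriented genus-$g$ surface with $n$ labeled faces of degrees $i_1,\dots,i_n$, each with a marked corner. -/
open scoped BigOperators

/-- The set of darts (edge-sides) of a candidate map: position `k` in the boundary of
face `a`, which has prescribed degree `i a`. -/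
abbrev Darts (n : ℕ) (i : Fin n → ℕ) := Σ a : Fin n, Fin (i a)

/-- The face permutation: rotation of the boundary positions of each face. -/
def facePerm (n : ℕ) (i : Fin n → ℕ) : Equiv.Perm (Darts n i) :=
  Equiv.sigmaCongrRight fun a => finRotate (i a)

/-- `mapCount g n i` is the number of maps (connected graphs embedded in a closed
oriented genus-`g` surface with cell complement) with `n` labeled faces of degrees
`i 0, …, i (n-1)`, each with a marked corner.  Combinatorially: the number of
fixed-point-free involutions `α` (gluings of the edge-sides in pairs) on the dart set
such that the group generated by `α` and the face rotation `φ` acts transitively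
(connectedness) and the Euler characteristic condition `V - E + F = 2 - 2g` holds,
where `V` is the number of cycles of `φ α` (including fixed points), `E = (∑ i)/2`
and `F = n`; the condition is stated doubled as `2V - ∑ i + 2n = 4 - 4g`. -/
noncomputable def mapCount (g n : ℕ) (i : Fin n → ℕ) : ℕ :=
  Nat.card {α : Equiv.Perm (Darts n i) //
    Function.Involutive α ∧ (∀ d, α d ≠ d) ∧
    (∀ d d' : Darts n i,
      d' ∈ MulAction.orbit (Subgroup.closure ({α, facePerm n i} : Set (Equiv.Perm (Darts n i)))) d) ∧
    (2 * (((Fintype.card (Darts n i) - (facePerm n i * α).support.card) +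
        Multiset.card (facePerm n i * α).cycleType : ℕ) : ℤ)
      - (∑ a, (i a : ℤ)) + 2 * n = 4 - 4 * g)}

set_option maxHeartbeats 1000000

open Equiv Equiv.Perm Function MulAction

def scSetoid {β : Type*} (σ : Perm β) : Setoid β :=
  ⟨σ.SameCycle, ⟨SameCycle.refl σ, SameCycle.symm, SameCycle.trans⟩⟩

noncomputable def orbCount {β : Type*} (σ : Perm β) : ℕ := Nat.card (Quotient (scSetoid σ))

lemma orbCount_eq_card {β : Type*} [Fintype β] [DecidableEq β] (σ : Perm β) :
    orbCount σ = (Fintype.card β - σ.support.card) + Multiset.card σ.cycleType := by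
  classical
  set f : β → ({x // σ x = x} ⊕ {c // c ∈ σ.cycleFactorsFinset}) := fun x =>
    if h : σ x = x then Sum.inl ⟨x, h⟩
    else Sum.inr ⟨σ.cycleOf x, cycleOf_mem_cycleFactorsFinset_iff.mpr (mem_support.mpr h)⟩ with hf
  have hwd : ∀ x y : β, σ.SameCycle x y → f x = f y := by
    intro x y hxy
    by_cases hx : σ x = x
    · have : x = y := hxy.eq_of_left hx
      subst this; rfl
    · have hy : ¬ σ y = y := fun hy => hx (hxy.apply_eq_self_iff.mpr hy)
      simp only [hf, dif_neg hx, dif_neg hy]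
      exact congrArg _ (Subtype.ext (SameCycle.cycleOf_eq hxy))
  set F : Quotient (scSetoid σ) → ({x // σ x = x} ⊕ {c // c ∈ σ.cycleFactorsFinset}) :=
    Quotient.lift f hwd with hF
  have hbij : Function.Bijective F := by
    constructor
    · rintro ⟨x⟩ ⟨y⟩ h
      have hfxy : f x = f y := h
      apply Quotient.sound
      show σ.SameCycle x y
      by_cases hx : σ x = x <;> by_cases hy : σ y = y <;>
        simp only [hf, dif_pos, dif_neg, hx, hy] at hfxy
      · cases Sum.inl.inj hfxy; exact SameCycle.refl _ _
      · exact absurd hfxy (by simp)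
      · exact absurd hfxy (by simp)
      · have hco : σ.cycleOf x = σ.cycleOf y := congrArg Subtype.val (Sum.inr.inj hfxy)
        have : y ∈ (σ.cycleOf y).support :=
          mem_support_cycleOf_iff.mpr ⟨SameCycle.refl _ _, Equiv.Perm.mem_support.mpr hy⟩
        rw [← hco] at this
        exact (mem_support_cycleOf_iff.mp this).1
    · rintro (⟨x, hx⟩ | ⟨c, hc⟩)
      · exact ⟨⟦x⟧, by simp [hF, hf, dif_pos hx]⟩
      · obtain ⟨x, hxc⟩ := (mem_cycleFactorsFinset_iff.mp hc).1.nonempty_support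
        have hxs : x ∈ σ.support := mem_cycleFactorsFinset_support_le hc hxc
        refine ⟨⟦x⟧, ?_⟩
        have hx : ¬ σ x = x := Equiv.Perm.mem_support.mp hxs
        have : c = σ.cycleOf x := cycle_is_cycleOf hxc hc
        simp [hF, hf, dif_neg hx, ← this]
  have h1 : orbCount σ = Nat.card ({x // σ x = x} ⊕ {c // c ∈ σ.cycleFactorsFinset}) :=
    Nat.card_congr (Equiv.ofBijective F hbij)
  rw [h1, Nat.card_sum]
  congr 1
  · rw [Nat.card_eq_fintype_card]
    rw [Fintype.card_congr (Equiv.subtypeEquivRight (q := fun x => ¬ x ∈ σ.support)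
      (by intro x; simp [Equiv.Perm.mem_support]))]
    rw [Fintype.card_subtype_compl]
    congr 1
    exact Fintype.card_coe _
  · rw [Nat.card_eq_fintype_card, Fintype.card_coe, cycleType_def]
    simp


lemma orbCount_congr {β γ : Type*} [Fintype β] [DecidableEq β] [Fintype γ] [DecidableEq γ]
    (σ : Perm β) (σ' : Perm γ) (ι : β → γ) (hι : Function.Injective ι)
    (h1 : ∀ x, σ' (ι x) = ι (σ x) ∨ (σ' (ι x) ∉ Set.range ι ∧ σ' (σ' (ι x)) = ι (σ x)))
    (h2 : ∀ y, y ∉ Set.range ι → σ' y ∈ Set.range ι) :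
    orbCount σ' = orbCount σ := by
  classical
  -- forward: ι maps same cycles to same cycles
  have key1 : ∀ x : β, σ'.SameCycle (ι x) (ι (σ x)) := by
    intro x
    rcases h1 x with h | ⟨-, h⟩
    · exact ⟨1, by simpa using h⟩
    · refine ⟨2, ?_⟩
      show (σ' ^ (2:ℕ) : Perm γ) (ι x) = ι (σ x)
      simpa [pow_succ, Equiv.Perm.mul_apply] using h
  have keyn : ∀ (m : ℕ) (x : β), σ'.SameCycle (ι x) (ι ((σ ^ m) x)) := by
    intro m
    induction m with
    | zero => intro x; simp; exact SameCycle.refl _ _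
    | succ m ih =>
      intro x
      have h := key1 ((σ ^ m) x)
      have he : (σ ^ (m+1)) x = σ ((σ ^ m) x) := by
        rw [pow_succ']; rfl
      rw [he]
      exact (ih x).trans h
  have fwd : ∀ x y : β, σ.SameCycle x y → σ'.SameCycle (ι x) (ι y) := by
    intro x y hxy
    obtain ⟨m, -, hm⟩ := hxy.exists_pow_eq'
    rw [← hm]; exact keyn m x
  -- backward
  have bwd : ∀ (m : ℕ) (x y : β), ((σ' ^ m) (ι x) = ι y) → σ.SameCycle x y := by
    intro m
    induction m using Nat.strong_induction_on with
    | _ m ih =>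
      intro x y hm
      match m with
      | 0 => cases hι (by simpa using hm); exact SameCycle.refl _ _
      | 1 =>
        rcases h1 x with h | ⟨hnr, -⟩
        · have : ι (σ x) = ι y := by rw [← h]; simpa [pow_one] using hm
          have := hι this
          exact ⟨1, by simpa using this⟩
        · exfalso
          apply hnr
          rw [show σ' (ι x) = ι y from by simpa using hm]
          exact ⟨y, rfl⟩
      | (m+2) =>
        rcases h1 x with h | ⟨-, h⟩
        · have hstep : (σ' ^ (m+1)) (ι (σ x)) = ι y := by
            rw [← h]
            have : (σ' ^ (m+2)) (ι x) = (σ' ^ (m+1)) (σ' (ι x)) := by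
              rw [pow_succ]; rfl
            rw [← this]; exact hm
          exact SameCycle.trans (⟨1, by simp⟩ : σ.SameCycle x (σ x)) (ih (m+1) (by omega) _ _ hstep)
        · have hstep : (σ' ^ m) (ι (σ x)) = ι y := by
            rw [← h]
            have : (σ' ^ (m+2)) (ι x) = (σ' ^ m) (σ' (σ' (ι x))) := by
              rw [show m + 2 = m + 1 + 1 from rfl, pow_succ, pow_succ]; rfl
            rw [← this]; exact hm
          exact SameCycle.trans (⟨1, by simp⟩ : σ.SameCycle x (σ x)) (ih m (by omega) _ _ hstep)
  have bwd' : ∀ x y : β, σ'.SameCycle (ι x) (ι y) → σ.SameCycle x y := by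
    intro x y hxy
    obtain ⟨m, -, hm⟩ := hxy.exists_pow_eq'
    exact bwd m x y hm
  -- the bijection on quotients
  set F : Quotient (scSetoid σ) → Quotient (scSetoid σ') :=
    Quotient.lift (fun x => Quotient.mk (scSetoid σ') (ι x)) (fun x y h => Quotient.sound (fwd x y h)) with hF
  have hbij : Function.Bijective F := by
    constructor
    · rintro ⟨x⟩ ⟨y⟩ h
      exact Quotient.sound (bwd' x y (Quotient.exact h))
    · rintro ⟨z⟩
      by_cases hz : z ∈ Set.range ι
      · obtain ⟨x, rfl⟩ := hz
        exact ⟨Quotient.mk _ x, rfl⟩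
      · obtain ⟨x, hx⟩ := h2 z hz
        refine ⟨Quotient.mk _ x, ?_⟩
        apply Quotient.sound
        show σ'.SameCycle (ι x) z
        exact SameCycle.symm (⟨1, by simpa using hx.symm⟩ : σ'.SameCycle z (ι x))
  exact (Nat.card_congr (Equiv.ofBijective F hbij)).symm


lemma orbit_mem_symm {G β : Type*} [Group G] [MulAction G β] {a b : β}
    (h : a ∈ orbit G b) : b ∈ orbit G a := by
  rw [orbit_eq_iff.mpr h]; exact mem_orbit_self b

lemma orbit_mem_trans {G β : Type*} [Group G] [MulAction G β] {a b c : β}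
    (h1 : a ∈ orbit G b) (h2 : b ∈ orbit G c) : a ∈ orbit G c := by
  rw [← orbit_eq_iff.mpr h2]; exact h1

lemma orbit_transfer {β γ : Type*} (S : Set (Perm γ)) (T : Set (Perm β)) (π : γ → β)
    (h : ∀ g ∈ S, ∀ z, π (g z) ∈ orbit (Subgroup.closure T) (π z)) :
    ∀ u ∈ Subgroup.closure S, ∀ z, π (u z) ∈ orbit (Subgroup.closure T) (π z) := by
  intro u hu
  induction hu using Subgroup.closure_induction with
  | mem g hg => exact h g hg
  | one => intro z; exact mem_orbit_self _
  | mul u v hu hv pu pv =>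
    intro z
    exact orbit_mem_trans (pu (v z)) (pv z)
  | inv u hu pu =>
    intro z
    have := pu (u⁻¹ z)
    rw [show u (u⁻¹ z) = z from Equiv.apply_symm_apply u z] at this
    exact orbit_mem_symm this

lemma step_mem_orbit {β : Type*} {S : Set (Perm β)} {g : Perm β} (hg : g ∈ S) (z : β) :
    g z ∈ orbit (Subgroup.closure S) z :=
  ⟨⟨g, Subgroup.subset_closure hg⟩, rfl⟩


lemma invariant_transfer {γ δ : Type*} (S : Set (Equiv.Perm γ)) (f : γ → δ)
    (h : ∀ g ∈ S, ∀ z, f (g z) = f z) :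
    ∀ u ∈ Subgroup.closure S, ∀ z, f (u z) = f z := by
  intro u hu
  induction hu using Subgroup.closure_induction with
  | mem g hg => exact h g hg
  | one => intro z; rfl
  | mul u v hu hv pu pv => intro z; rw [Perm.mul_apply, pu, pv]
  | inv u hu pu =>
    intro z
    have := pu (u⁻¹ z)
    rw [show u (u⁻¹ z) = z from Equiv.apply_symm_apply u z] at this
    exact this.symm



namespace DilatonAux

variable {n : ℕ} {i : Fin n → ℕ}

def dIota (x : Darts n i) : Darts (n+1) (Fin.cons 2 i) := ⟨x.1.succ, x.2⟩

def dA : Darts (n+1) (Fin.cons 2 i) := ⟨0, ⟨0, by rw [Fin.cons_zero]; norm_num⟩⟩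
def dB : Darts (n+1) (Fin.cons 2 i) := ⟨0, ⟨1, by rw [Fin.cons_zero]; norm_num⟩⟩

lemma dA_ne_dB : (dA : Darts (n+1) (Fin.cons 2 i)) ≠ dB := by
  intro h
  obtain ⟨-, h2⟩ := Sigma.mk.inj_iff.mp h
  have := congrArg Fin.val (eq_of_heq h2)
  simp at this

lemma dIota_ne_dA (x : Darts n i) : dIota x ≠ dA := by
  intro h
  exact Fin.succ_ne_zero _ (congrArg Sigma.fst h)

lemma dIota_ne_dB (x : Darts n i) : dIota x ≠ dB := by
  intro h
  exact Fin.succ_ne_zero _ (congrArg Sigma.fst h)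

def unIota : Darts (n+1) (Fin.cons 2 i) → Option (Darts n i) := fun z =>
  Fin.cases (motive := fun a => Fin ((Fin.cons 2 i : Fin (n+1) → ℕ) a) → Option (Darts n i))
    (fun _ => none) (fun a k => some ⟨a, k⟩) z.1 z.2

lemma unIota_dIota (x : Darts n i) : unIota (dIota x) = some x := by
  obtain ⟨a, k⟩ := x
  simp [unIota, dIota]

lemma unIota_dA : unIota (dA : Darts (n+1) (Fin.cons 2 i)) = none := by
  simp [unIota, dA]

lemma unIota_dB : unIota (dB : Darts (n+1) (Fin.cons 2 i)) = none := by
  simp [unIota, dB]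

lemma dIota_inj : Function.Injective (dIota (n := n) (i := i)) := by
  intro x y h
  have := congrArg unIota h
  rw [unIota_dIota, unIota_dIota] at this
  exact Option.some_injective _ this

lemma trichotomy (z : Darts (n+1) (Fin.cons 2 i)) :
    z = dA ∨ z = dB ∨ ∃ x, z = dIota x := by
  obtain ⟨a, k⟩ := z
  revert k
  refine Fin.cases ?_ ?_ a
  · intro k
    have hk : k.val < 2 := by
      have h1 := k.isLt
      have h2 : (Fin.cons 2 i : Fin (n+1) → ℕ) 0 = 2 := Fin.cons_zero _ _
      omega
    have : k.val = 0 ∨ k.val = 1 := by omega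
    rcases this with h | h
    · exact Or.inl (congrArg (Sigma.mk 0) (Fin.ext h))
    · exact Or.inr (Or.inl (congrArg (Sigma.mk 0) (Fin.ext h)))
  · intro a k
    exact Or.inr (Or.inr ⟨⟨a, k⟩, rfl⟩)

lemma facePerm_dIota (x : Darts n i) :
    facePerm (n+1) (Fin.cons 2 i) (dIota x) = dIota (facePerm n i x) := rfl

lemma facePerm_dA : facePerm (n+1) (Fin.cons 2 i) dA = dB := by
  apply congrArg (Sigma.mk 0)
  exact (by decide : finRotate 2 (⟨0, by norm_num⟩ : Fin 2) = ⟨1, by norm_num⟩)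

lemma facePerm_dB : facePerm (n+1) (Fin.cons 2 i) dB = dA := by
  apply congrArg (Sigma.mk 0)
  exact (by decide : finRotate 2 (⟨1, by norm_num⟩ : Fin 2) = ⟨0, by norm_num⟩)


variable (dd : Darts n i) (al : Equiv.Perm (Darts n i))

def glueFun : Darts (n+1) (Fin.cons 2 i) → Darts (n+1) (Fin.cons 2 i) := fun z =>
  match unIota z with
  | none => if z = dA then dIota dd else dIota (al dd)
  | some x => if x = dd then dA else if x = al dd then dB else dIota (al x)

lemma glueFun_dA : glueFun dd al dA = dIota dd := by
  simp [glueFun, unIota_dA]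

lemma glueFun_dB : glueFun dd al dB = dIota (al dd) := by
  simp [glueFun, unIota_dB, dA_ne_dB.symm]

lemma glueFun_dIota (x : Darts n i) :
    glueFun dd al (dIota x) = if x = dd then dA else if x = al dd then dB else dIota (al x) := by
  simp [glueFun, unIota_dIota]

lemma glueFun_invol (hal : Function.Involutive al) (hne : al dd ≠ dd) :
    Function.Involutive (glueFun dd al) := by
  intro z
  rcases trichotomy z with rfl | rfl | ⟨x, rfl⟩
  · rw [glueFun_dA, glueFun_dIota, if_pos rfl]
  · rw [glueFun_dB, glueFun_dIota, if_neg hne, if_pos rfl]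
  · rw [glueFun_dIota]
    by_cases h1 : x = dd
    · rw [if_pos h1, glueFun_dA, h1]
    · rw [if_neg h1]
      by_cases h2 : x = al dd
      · rw [if_pos h2, glueFun_dB, h2]
      · rw [if_neg h2, glueFun_dIota]
        rw [if_neg (fun h => h2 (by rw [← hal x, h]))]
        rw [if_neg (fun h => h1 (by rw [← hal x, h, hal]))]
        rw [hal]

variable (hal : Function.Involutive al) (hne : al dd ≠ dd)

def gluePerm : Equiv.Perm (Darts (n+1) (Fin.cons 2 i)) :=
  (glueFun_invol dd al hal hne).toPerm

lemma gluePerm_apply (z) : gluePerm dd al hal hne z = glueFun dd al z := rfl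

lemma gluePerm_fpf (hfpf : ∀ d, al d ≠ d) (z) : gluePerm dd al hal hne z ≠ z := by
  rw [gluePerm_apply]
  rcases trichotomy z with rfl | rfl | ⟨x, rfl⟩
  · rw [glueFun_dA]; exact (dIota_ne_dA dd)
  · rw [glueFun_dB]; exact (dIota_ne_dB _)
  · rw [glueFun_dIota]
    by_cases h1 : x = dd
    · rw [if_pos h1]; exact fun h => dIota_ne_dA x h.symm
    · rw [if_neg h1]
      by_cases h2 : x = al dd
      · rw [if_pos h2]; exact fun h => dIota_ne_dB x h.symm
      · rw [if_neg h2]; exact fun h => hfpf x (dIota_inj h)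


lemma glue_h1 (x : Darts n i) :
    (facePerm (n+1) (Fin.cons 2 i) * gluePerm dd al hal hne) (dIota x)
        = dIota ((facePerm n i * al) x) ∨
      ((facePerm (n+1) (Fin.cons 2 i) * gluePerm dd al hal hne) (dIota x) ∉ Set.range dIota ∧
        (facePerm (n+1) (Fin.cons 2 i) * gluePerm dd al hal hne)
          ((facePerm (n+1) (Fin.cons 2 i) * gluePerm dd al hal hne) (dIota x))
          = dIota ((facePerm n i * al) x)) := by
  by_cases h1 : x = dd
  · right
    subst h1
    have e1 : (facePerm (n+1) (Fin.cons 2 i) * gluePerm x al hal hne) (dIota x) = dB := by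
      rw [Perm.mul_apply, gluePerm_apply, glueFun_dIota, if_pos rfl, facePerm_dA]
    rw [e1]
    constructor
    · rintro ⟨y, hy⟩; exact dIota_ne_dB y hy
    · rw [Perm.mul_apply, gluePerm_apply, glueFun_dB, facePerm_dIota, Perm.mul_apply]
  · by_cases h2 : x = al dd
    · right
      subst h2
      have e1 : (facePerm (n+1) (Fin.cons 2 i) * gluePerm dd al hal hne) (dIota (al dd)) = dA := by
        rw [Perm.mul_apply, gluePerm_apply, glueFun_dIota, if_neg h1, if_pos rfl, facePerm_dB]
      rw [e1]
      constructor
      · rintro ⟨y, hy⟩; exact dIota_ne_dA y hy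
      · rw [Perm.mul_apply, gluePerm_apply, glueFun_dA, facePerm_dIota, Perm.mul_apply]
        rw [hal dd]
    · left
      rw [Perm.mul_apply, gluePerm_apply, glueFun_dIota, if_neg h1, if_neg h2, facePerm_dIota,
        Perm.mul_apply]

lemma glue_h2 (y : Darts (n+1) (Fin.cons 2 i)) (hy : y ∉ Set.range (dIota (n := n) (i := i))) :
    (facePerm (n+1) (Fin.cons 2 i) * gluePerm dd al hal hne) y ∈ Set.range dIota := by
  rcases trichotomy y with rfl | rfl | ⟨x, rfl⟩
  · rw [Perm.mul_apply, gluePerm_apply, glueFun_dA, facePerm_dIota]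
    exact ⟨_, rfl⟩
  · rw [Perm.mul_apply, gluePerm_apply, glueFun_dB, facePerm_dIota]
    exact ⟨_, rfl⟩
  · exact absurd ⟨x, rfl⟩ hy

lemma glue_orbCount :
    orbCount (facePerm (n+1) (Fin.cons 2 i) * gluePerm dd al hal hne)
      = orbCount (facePerm n i * al) :=
  orbCount_congr _ _ dIota dIota_inj (glue_h1 dd al hal hne) (glue_h2 dd al hal hne)

lemma card_darts_succ :
    Fintype.card (Darts (n+1) (Fin.cons 2 i)) = 2 + Fintype.card (Darts n i) := by
  rw [Fintype.card_sigma, Fintype.card_sigma]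
  simp [Fin.sum_cons]

lemma sum_cons_int :
    (∑ a, (((Fin.cons 2 i : Fin (n+1) → ℕ) a : ℕ) : ℤ)) = 2 + ∑ a, (i a : ℤ) := by
  rw [← Nat.cast_sum, ← Nat.cast_sum, Fin.sum_cons]
  push_cast
  ring

lemma glue_euler (g : ℕ) :
    (2 * (((Fintype.card (Darts (n+1) (Fin.cons 2 i))
          - (facePerm (n+1) (Fin.cons 2 i) * gluePerm dd al hal hne).support.card)
        + Multiset.card (facePerm (n+1) (Fin.cons 2 i) * gluePerm dd al hal hne).cycleType : ℕ) : ℤ)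
        - (∑ a, (((Fin.cons 2 i : Fin (n+1) → ℕ) a : ℕ) : ℤ)) + 2 * (↑(n+1) : ℤ) = 4 - 4 * g)
    ↔ (2 * (((Fintype.card (Darts n i) - (facePerm n i * al).support.card)
        + Multiset.card (facePerm n i * al).cycleType : ℕ) : ℤ)
        - (∑ a, (i a : ℤ)) + 2 * (n : ℤ) = 4 - 4 * g) := by
  rw [← orbCount_eq_card, ← orbCount_eq_card, glue_orbCount, sum_cons_int]
  push_cast
  constructor <;> intro h <;> linarith


lemma glue_trans_forward
    (ht : ∀ x x' : Darts n i,
      x' ∈ orbit (Subgroup.closure ({al, facePerm n i} : Set (Perm (Darts n i)))) x)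
    (z z' : Darts (n+1) (Fin.cons 2 i)) :
    z' ∈ orbit (Subgroup.closure
      ({gluePerm dd al hal hne, facePerm (n+1) (Fin.cons 2 i)} :
        Set (Perm (Darts (n+1) (Fin.cons 2 i))))) z := by
  set S' : Set (Perm (Darts (n+1) (Fin.cons 2 i))) :=
    {gluePerm dd al hal hne, facePerm (n+1) (Fin.cons 2 i)} with hS'
  have hg1 : gluePerm dd al hal hne ∈ S' := Set.mem_insert _ _
  have hg2 : facePerm (n+1) (Fin.cons 2 i) ∈ S' := Set.mem_insert_iff.mpr (Or.inr rfl)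
  -- ι maps orbits to orbits
  have key : ∀ g ∈ ({al, facePerm n i} : Set (Perm (Darts n i))), ∀ x : Darts n i,
      dIota (g x) ∈ orbit (Subgroup.closure S') (dIota x) := by
    have keyPhi : ∀ x : Darts n i,
        dIota (facePerm n i x) ∈ orbit (Subgroup.closure S') (dIota x) := by
      intro x
      rw [← facePerm_dIota]
      exact step_mem_orbit hg2 _
    have keyAl : ∀ x : Darts n i,
        dIota (al x) ∈ orbit (Subgroup.closure S') (dIota x) := by
      intro x
      by_cases h1 : x = dd
      · rw [h1]
        have s1 : gluePerm dd al hal hne (dIota dd) = dA := by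
          rw [gluePerm_apply, glueFun_dIota, if_pos rfl]
        have s2 : facePerm (n+1) (Fin.cons 2 i) dA = dB := facePerm_dA
        have s3 : gluePerm dd al hal hne dB = dIota (al dd) := by
          rw [gluePerm_apply, glueFun_dB]
        rw [← s3]
        refine orbit_mem_trans (step_mem_orbit hg1 _) ?_
        rw [← s2]
        refine orbit_mem_trans (step_mem_orbit hg2 _) ?_
        rw [← s1]
        exact step_mem_orbit hg1 _
      · by_cases h2 : x = al dd
        · subst h2
          have s1 : gluePerm dd al hal hne (dIota (al dd)) = dB := by
            rw [gluePerm_apply, glueFun_dIota, if_neg h1, if_pos rfl]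
          have s2 : facePerm (n+1) (Fin.cons 2 i) dB = dA := facePerm_dB
          have s3 : gluePerm dd al hal hne dA = dIota dd := by
            rw [gluePerm_apply, glueFun_dA]
          rw [hal dd, ← s3]
          refine orbit_mem_trans (step_mem_orbit hg1 _) ?_
          rw [← s2]
          refine orbit_mem_trans (step_mem_orbit hg2 _) ?_
          rw [← s1]
          exact step_mem_orbit hg1 _
        · have s1 : gluePerm dd al hal hne (dIota x) = dIota (al x) := by
            rw [gluePerm_apply, glueFun_dIota, if_neg h1, if_neg h2]
          rw [← s1]
          exact step_mem_orbit hg1 _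
    intro g hg x
    rcases hg with h | h
    · rw [h]; exact keyAl x
    · rw [Set.eq_of_mem_singleton h]; exact keyPhi x
  have key2 := orbit_transfer _ _ _ key
  -- every dart is two-way connected to an ι-dart
  have aux : ∀ w : Darts (n+1) (Fin.cons 2 i), ∃ x : Darts n i,
      dIota x ∈ orbit (Subgroup.closure S') w ∧ w ∈ orbit (Subgroup.closure S') (dIota x) := by
    intro w
    rcases trichotomy w with rfl | rfl | ⟨x, rfl⟩
    · refine ⟨dd, ?_, ?_⟩
      · have s3 : gluePerm dd al hal hne dA = dIota dd := by
          rw [gluePerm_apply, glueFun_dA]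
        rw [← s3]; exact step_mem_orbit hg1 _
      · have s1 : gluePerm dd al hal hne (dIota dd) = dA := by
          rw [gluePerm_apply, glueFun_dIota, if_pos rfl]
        rw [← s1]; exact step_mem_orbit hg1 _
    · refine ⟨al dd, ?_, ?_⟩
      · have s3 : gluePerm dd al hal hne dB = dIota (al dd) := by
          rw [gluePerm_apply, glueFun_dB]
        rw [← s3]; exact step_mem_orbit hg1 _
      · have s1 : gluePerm dd al hal hne (dIota (al dd)) = dB := by
          rw [gluePerm_apply, glueFun_dIota, if_neg hne, if_pos rfl]
        rw [← s1]; exact step_mem_orbit hg1 _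
    · exact ⟨x, mem_orbit_self _, mem_orbit_self _⟩
  obtain ⟨x, hx1, hx2⟩ := aux z
  obtain ⟨x', hx'1, hx'2⟩ := aux z'
  have hxx' : dIota x' ∈ orbit (Subgroup.closure S') (dIota x) := by
    obtain ⟨⟨u, hu⟩, hux⟩ := ht x x'
    have := key2 u hu x
    rw [show u x = x' from hux] at this
    exact this
  exact orbit_mem_trans (orbit_mem_trans hx'2 hxx') hx1

def proj : Darts (n+1) (Fin.cons 2 i) → Darts n i := fun z =>
  match unIota z with
  | some x => x
  | none => if z = dA then dd else al dd

lemma proj_dIota (x : Darts n i) : proj dd al (dIota x) = x := by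
  simp [proj, unIota_dIota]

lemma proj_dA : proj dd al dA = dd := by
  simp [proj, unIota_dA]

lemma proj_dB : proj dd al dB = al dd := by
  simp [proj, unIota_dB, dA_ne_dB.symm]

lemma glue_trans_backward
    (ht : ∀ z z' : Darts (n+1) (Fin.cons 2 i),
      z' ∈ orbit (Subgroup.closure
        ({gluePerm dd al hal hne, facePerm (n+1) (Fin.cons 2 i)} :
          Set (Perm (Darts (n+1) (Fin.cons 2 i))))) z)
    (x x' : Darts n i) :
    x' ∈ orbit (Subgroup.closure ({al, facePerm n i} : Set (Perm (Darts n i)))) x := by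
  set S : Set (Perm (Darts n i)) := {al, facePerm n i} with hS
  have hg1 : al ∈ S := Set.mem_insert _ _
  have hg2 : facePerm n i ∈ S := Set.mem_insert_iff.mpr (Or.inr rfl)
  have key : ∀ g ∈ ({gluePerm dd al hal hne, facePerm (n+1) (Fin.cons 2 i)} :
      Set (Perm (Darts (n+1) (Fin.cons 2 i)))), ∀ z,
      proj dd al (g z) ∈ orbit (Subgroup.closure S) (proj dd al z) := by
    have keyGlue : ∀ z, proj dd al (gluePerm dd al hal hne z)
        ∈ orbit (Subgroup.closure S) (proj dd al z) := by
      intro z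
      rcases trichotomy z with rfl | rfl | ⟨y, rfl⟩
      · rw [proj_dA, gluePerm_apply, glueFun_dA, proj_dIota]
        exact mem_orbit_self _
      · rw [proj_dB, gluePerm_apply, glueFun_dB, proj_dIota]
        exact mem_orbit_self _
      · rw [proj_dIota, gluePerm_apply, glueFun_dIota]
        by_cases h1 : y = dd
        · rw [if_pos h1, proj_dA, h1]; exact mem_orbit_self _
        · rw [if_neg h1]
          by_cases h2 : y = al dd
          · rw [if_pos h2, proj_dB, h2]; exact mem_orbit_self _
          · rw [if_neg h2, proj_dIota]
            exact step_mem_orbit hg1 _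
    have keyPhi : ∀ z, proj dd al (facePerm (n+1) (Fin.cons 2 i) z)
        ∈ orbit (Subgroup.closure S) (proj dd al z) := by
      intro z
      rcases trichotomy z with rfl | rfl | ⟨y, rfl⟩
      · rw [proj_dA, facePerm_dA, proj_dB]
        exact step_mem_orbit hg1 _
      · rw [proj_dB, facePerm_dB, proj_dA]
        have h := step_mem_orbit hg1 (al dd)
        rw [hal dd] at h
        exact h
      · rw [proj_dIota, facePerm_dIota, proj_dIota]
        exact step_mem_orbit hg2 _
    intro g hg z
    rcases hg with h | h
    · rw [h]; exact keyGlue z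
    · rw [Set.eq_of_mem_singleton h]; exact keyPhi z
  have key2 := orbit_transfer _ _ _ key
  obtain ⟨⟨u, hu⟩, hux⟩ := ht (dIota x) (dIota x')
  have := key2 u hu (dIota x)
  rw [show u (dIota x) = dIota x' from hux, proj_dIota, proj_dIota] at this
  exact this

end DilatonAux


namespace DilatonAux

def Pred (g : ℕ) {n : ℕ} {i : Fin n → ℕ} (al : Perm (Darts n i)) : Prop :=
  Function.Involutive al ∧ (∀ d, al d ≠ d) ∧
  (∀ d d' : Darts n i,
    d' ∈ MulAction.orbit (Subgroup.closure ({al, facePerm n i} : Set (Perm (Darts n i)))) d) ∧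
  (2 * (((Fintype.card (Darts n i) - (facePerm n i * al).support.card) +
      Multiset.card (facePerm n i * al).cycleType : ℕ) : ℤ)
    - (∑ a, (i a : ℤ)) + 2 * n = 4 - 4 * g)

lemma mapCount_eq (g n : ℕ) (i : Fin n → ℕ) :
    mapCount g n i = Nat.card {al : Perm (Darts n i) // Pred g al} := rfl

variable {n : ℕ} {i : Fin n → ℕ}

lemma cardB (g : ℕ) :
    Nat.card {al' : Perm (Darts (n+1) (Fin.cons 2 i)) // Pred g al' ∧ ¬ (al' dA = dB)} =
      Nat.card (Darts n i × {al : Perm (Darts n i) // Pred g al}) := by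
  classical
  symm
  apply Nat.card_congr
  refine Equiv.ofBijective
    (fun p => ⟨gluePerm p.1 p.2.1 p.2.2.1 (p.2.2.2.1 p.1),
      ⟨⟨glueFun_invol p.1 p.2.1 p.2.2.1 (p.2.2.2.1 p.1),
        gluePerm_fpf p.1 p.2.1 p.2.2.1 (p.2.2.2.1 p.1) p.2.2.2.1,
        glue_trans_forward p.1 p.2.1 p.2.2.1 (p.2.2.2.1 p.1) p.2.2.2.2.1,
        (glue_euler p.1 p.2.1 p.2.2.1 (p.2.2.2.1 p.1) g).mpr p.2.2.2.2.2⟩,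
        fun h => dIota_ne_dB p.1 (by rwa [gluePerm_apply, glueFun_dA] at h)⟩⟩) ⟨?_, ?_⟩
  · -- injective
    rintro ⟨dd1, al1, hinv1, hfpf1, htr1, heu1⟩ ⟨dd2, al2, hinv2, hfpf2, htr2, heu2⟩ h
    have hperm := congrArg Subtype.val h
    simp only at hperm
    have happ : ∀ z, gluePerm dd1 al1 hinv1 (hfpf1 dd1) z
        = gluePerm dd2 al2 hinv2 (hfpf2 dd2) z := fun z => by rw [hperm]
    have hdd : dd1 = dd2 := by
      have := happ dA
      rw [gluePerm_apply, gluePerm_apply, glueFun_dA, glueFun_dA] at this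
      exact dIota_inj this
    subst hdd
    have haldd : al1 dd1 = al2 dd1 := by
      have := happ dB
      rw [gluePerm_apply, gluePerm_apply, glueFun_dB, glueFun_dB] at this
      exact dIota_inj this
    have hals : al1 = al2 := by
      apply Equiv.ext
      intro x
      by_cases h1 : x = dd1
      · rw [h1, haldd]
      · by_cases h2 : x = al1 dd1
        · rw [h2, hinv1 dd1, haldd, hinv2 dd1]
        · have := happ (dIota x)
          rw [gluePerm_apply, gluePerm_apply, glueFun_dIota, glueFun_dIota,
            if_neg h1, if_neg h1, if_neg h2, if_neg (haldd ▸ h2)] at this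
          exact dIota_inj this
    simp only [Prod.mk.injEq, Subtype.mk.injEq]
    exact ⟨by trivial, Subtype.ext hals⟩
  · -- surjective
    rintro ⟨al', ⟨hinv, hfpf, htr, heu⟩, hne⟩
    -- find dd with al' dA = dIota dd
    have hdd : ∃ dd, al' dA = dIota dd := by
      rcases trichotomy (al' dA) with h | h | ⟨x, h⟩
      · exact absurd h (hfpf dA)
      · exact absurd h hne
      · exact ⟨x, h⟩
    obtain ⟨dd, hdd⟩ := hdd
    have hee : ∃ ee, al' dB = dIota ee := by
      rcases trichotomy (al' dB) with h | h | ⟨x, h⟩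
      · exfalso
        apply hne
        rw [← h, hinv]
      · exact absurd h (hfpf dB)
      · exact ⟨x, h⟩
    obtain ⟨ee, hee⟩ := hee
    have hAdd : al' (dIota dd) = dA := by rw [← hdd, hinv]
    have hBee : al' (dIota ee) = dB := by rw [← hee, hinv]
    have hddee : dd ≠ ee := by
      intro h
      rw [h, hBee] at hAdd
      exact dA_ne_dB hAdd.symm
    -- al' (dIota x) is in the image for x ∉ {dd, ee}
    have himg : ∀ x : Darts n i, x ≠ dd → x ≠ ee → ∃ y, al' (dIota x) = dIota y := by
      intro x hx1 hx2
      rcases trichotomy (al' (dIota x)) with h | h | ⟨y, h⟩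
      · exfalso
        apply hx1
        apply dIota_inj
        rw [← hdd, ← h, hinv]
      · exfalso
        apply hx2
        apply dIota_inj
        rw [← hee, ← h, hinv]
      · exact ⟨y, h⟩
    classical
    set f : Darts n i → Darts n i := fun x =>
      if x = dd then ee else if x = ee then dd else (unIota (al' (dIota x))).getD dd
      with hfdef
    have hf1 : f dd = ee := by simp [hfdef]
    have hf2 : f ee = dd := by simp [hfdef, hddee.symm]
    have hf3 : ∀ x, x ≠ dd → x ≠ ee → ∀ y, al' (dIota x) = dIota y → f x = y := by
      intro x hx1 hx2 y hy
      simp [hfdef, if_neg hx1, if_neg hx2, hy, unIota_dIota]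
    have hy_not : ∀ x, x ≠ dd → x ≠ ee → ∀ y, al' (dIota x) = dIota y → y ≠ dd ∧ y ≠ ee := by
      intro x hx1 hx2 y hy
      constructor
      · rintro rfl
        exact dIota_ne_dA x (by rw [← hAdd, ← hy, hinv])
      · rintro rfl
        exact dIota_ne_dB x (by rw [← hBee, ← hy, hinv])
    have hinvf : Function.Involutive f := by
      intro x
      by_cases h1 : x = dd
      · rw [h1, hf1, hf2]
      · by_cases h2 : x = ee
        · rw [h2, hf2, hf1]
        · obtain ⟨y, hy⟩ := himg x h1 h2
          obtain ⟨hynd, hyne⟩ := hy_not x h1 h2 y hy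
          rw [hf3 x h1 h2 y hy]
          exact hf3 y hynd hyne x (by rw [← hy, hinv])
    have hfpf' : ∀ x, f x ≠ x := by
      intro x
      by_cases h1 : x = dd
      · rw [h1, hf1]; exact hddee.symm
      · by_cases h2 : x = ee
        · rw [h2, hf2]; exact hddee
        · obtain ⟨y, hy⟩ := himg x h1 h2
          rw [hf3 x h1 h2 y hy]
          rintro rfl
          exact hfpf (dIota y) hy
    set alP : Perm (Darts n i) := hinvf.toPerm f with halP
    have halP_apply : ∀ x, alP x = f x := fun _ => rfl
    have halP_invol : Function.Involutive ⇑alP := hinvf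
    have halne : alP dd ≠ dd := by rw [halP_apply, hf1]; exact hddee.symm
    have halEq : al' = gluePerm dd alP halP_invol halne := by
      apply Equiv.ext
      intro z
      rcases trichotomy z with rfl | rfl | ⟨x, rfl⟩
      · rw [gluePerm_apply, glueFun_dA, hdd]
      · rw [gluePerm_apply, glueFun_dB, halP_apply, hf1, hee]
      · rw [gluePerm_apply, glueFun_dIota]
        by_cases h1 : x = dd
        · rw [if_pos h1, h1, hAdd]
        · rw [if_neg h1]
          by_cases h2 : x = alP dd
          · rw [if_pos h2, h2, halP_apply, hf1, hBee]
          · rw [if_neg h2]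
            rw [halP_apply, hf1] at h2
            obtain ⟨y, hy⟩ := himg x h1 h2
            rw [hy, halP_apply, hf3 x h1 h2 y hy]
    have hPred : Pred g alP := by
      refine ⟨halP_invol, fun d => by rw [halP_apply]; exact hfpf' d, ?_, ?_⟩
      · intro d d'
        apply glue_trans_backward dd alP halP_invol halne
        rw [halEq] at htr
        exact htr
      · rw [halEq] at heu
        exact (glue_euler dd alP halP_invol halne g).mp heu
    refine ⟨⟨dd, ⟨alP, hPred⟩⟩, ?_⟩
    apply Subtype.ext
    show gluePerm dd alP hPred.1 (hPred.2.1 dd) = al'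
    apply Equiv.ext
    intro z
    rw [halEq]
  

lemma card_split {δ : Type*} [Finite δ] (P Q : δ → Prop) :
    Nat.card {x // P x} = Nat.card {x // P x ∧ Q x} + Nat.card {x // P x ∧ ¬ Q x} := by
  classical
  rw [← Nat.card_sum]
  apply Nat.card_congr
  exact ⟨fun x => if h : Q x then Sum.inl ⟨x, x.2, h⟩ else Sum.inr ⟨x, x.2, h⟩,
    Sum.elim (fun y => ⟨y.1, y.2.1⟩) (fun y => ⟨y.1, y.2.1⟩),
    fun x => by by_cases h : Q x <;> simp [h],
    fun y => by rcases y with y | y <;> simp [y.2.2]⟩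

lemma isEmptyDarts (i0 : Fin 0 → ℕ) : IsEmpty (Darts 0 i0) := ⟨fun x => x.1.elim0⟩

lemma trichotomy0 {i0 : Fin 0 → ℕ} (z : Darts (0+1) (Fin.cons 2 i0)) : z = dA ∨ z = dB := by
  rcases trichotomy z with h | h | ⟨x, -⟩
  · exact Or.inl h
  · exact Or.inr h
  · exact x.1.elim0

lemma cardA0 (g : ℕ) (i0 : Fin 0 → ℕ) :
    Nat.card {al' : Perm (Darts (0+1) (Fin.cons 2 i0)) // Pred g al' ∧ al' dA = dB}
      = if g = 0 then 1 else 0 := by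
  classical
  have hswA : Equiv.swap (dA (i := i0)) dB dA = dB := Equiv.swap_apply_left _ _
  have hswB : Equiv.swap (dA (i := i0)) dB dB = dA := Equiv.swap_apply_right _ _
  -- any member equals the swap
  have huniq : ∀ al' : Perm (Darts (0+1) (Fin.cons 2 i0)), Pred g al' → al' dA = dB →
      al' = Equiv.swap dA dB := by
    intro al' ⟨hinv, hfpf, htr, heu⟩ hAB
    have hBA : al' dB = dA := by rw [← hAB, hinv]
    apply Equiv.ext
    intro z
    rcases trichotomy0 z with rfl | rfl
    · rw [hAB, hswA]
    · rw [hBA, hswB]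
  -- the product with facePerm is the identity
  have hprod : facePerm (0+1) (Fin.cons 2 i0) * Equiv.swap (dA (i := i0)) dB = 1 := by
    apply Equiv.ext
    intro z
    rcases trichotomy0 z with rfl | rfl
    · rw [Perm.mul_apply, hswA, facePerm_dB]; rfl
    · rw [Perm.mul_apply, hswB, facePerm_dA]; rfl
  have hcard2 : Fintype.card (Darts (0+1) (Fin.cons 2 i0)) = 2 := by
    rw [card_darts_succ]
    haveI := isEmptyDarts i0
    rw [Fintype.card_eq_zero]
  have hsum2 : (∑ a, (((Fin.cons 2 i0 : Fin (0+1) → ℕ) a : ℕ) : ℤ)) = 2 := by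
    rw [sum_cons_int]
    simp
  -- euler condition for the swap says g = 0
  have heuler_iff : ∀ al' : Perm (Darts (0+1) (Fin.cons 2 i0)), al' = Equiv.swap dA dB →
      ((2 * (((Fintype.card (Darts (0+1) (Fin.cons 2 i0)) - (facePerm (0+1) (Fin.cons 2 i0) * al').support.card) +
        Multiset.card (facePerm (0+1) (Fin.cons 2 i0) * al').cycleType : ℕ) : ℤ)
      - (∑ a, (((Fin.cons 2 i0 : Fin (0+1) → ℕ) a : ℕ) : ℤ)) + 2 * (1:ℕ) = 4 - 4 * g) ↔ g = 0) := by
    intro al' h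
    subst h
    rw [hprod, hcard2, hsum2]
    simp [Equiv.Perm.cycleType_one]
    omega
  by_cases hg : g = 0
  · subst hg
    rw [if_pos rfl]
    rw [Nat.card_eq_one_iff_unique]
    constructor
    · constructor
      intro x y
      apply Subtype.ext
      rw [huniq x.1 x.2.1 x.2.2, huniq y.1 y.2.1 y.2.2]
    · refine ⟨Equiv.swap dA dB, ⟨?_, ?_, ?_, ?_⟩, hswA⟩
      · intro z
        rcases trichotomy0 z with rfl | rfl
        · rw [hswA, hswB]
        · rw [hswB, hswA]
      · intro z
        rcases trichotomy0 z with rfl | rfl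
        · rw [hswA]; exact dA_ne_dB.symm
        · rw [hswB]; exact dA_ne_dB
      · intro d d'
        have hstep := step_mem_orbit (S := {Equiv.swap (dA (i := i0)) dB, facePerm (0+1) (Fin.cons 2 i0)})
          (Set.mem_insert _ _)
        rcases trichotomy0 d with rfl | rfl <;> rcases trichotomy0 d' with rfl | rfl
        · exact MulAction.mem_orbit_self _
        · have := hstep dA; rwa [hswA] at this
        · have := hstep dB; rwa [hswB] at this
        · exact MulAction.mem_orbit_self _
      · exact (heuler_iff _ rfl).mpr rfl
  · rw [if_neg hg]
    have : IsEmpty {al' : Perm (Darts (0+1) (Fin.cons 2 i0)) // Pred g al' ∧ al' dA = dB} := by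
      constructor
      rintro ⟨al', hP, hAB⟩
      exact hg ((heuler_iff al' (huniq al' hP hAB)).mp hP.2.2.2)
    exact Nat.card_of_isEmpty

lemma cardA_pos (g : ℕ) (hn : n ≠ 0) (hi : ∀ a, 1 ≤ i a) :
    Nat.card {al' : Perm (Darts (n+1) (Fin.cons 2 i)) // Pred g al' ∧ al' dA = dB} = 0 := by
  have : IsEmpty {al' : Perm (Darts (n+1) (Fin.cons 2 i)) // Pred g al' ∧ al' dA = dB} := by
    constructor
    rintro ⟨al', ⟨hinv, hfpf, htr, heu⟩, hAB⟩
    have hBA : al' dB = dA := by rw [← hAB, hinv]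
    set x0 : Darts n i := ⟨⟨0, Nat.pos_of_ne_zero hn⟩, ⟨0, hi _⟩⟩ with hx0
    set F : Darts (n+1) (Fin.cons 2 i) → Prop := fun z => z.1 = 0 with hF
    have hkey : ∀ u ∈ ({al', facePerm (n+1) (Fin.cons 2 i)} :
        Set (Perm (Darts (n+1) (Fin.cons 2 i)))), ∀ z, F (u z) = F z := by
      have hal : ∀ z, F (al' z) = F z := by
        intro z
        rcases trichotomy z with rfl | rfl | ⟨x, rfl⟩
        · rw [hAB]; rfl
        · rw [hBA]; rfl
        · have : ∃ y, al' (dIota x) = dIota y := by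
            rcases trichotomy (al' (dIota x)) with h | h | ⟨y, h⟩
            · exact absurd (show dIota x = dB by rw [← hAB, ← h, hinv]) (dIota_ne_dB x)
            · exact absurd (show dIota x = dA by rw [← hBA, ← h, hinv]) (dIota_ne_dA x)
            · exact ⟨y, h⟩
          obtain ⟨y, hy⟩ := this
          rw [hy]
          exact propext (iff_of_false (Fin.succ_ne_zero _) (Fin.succ_ne_zero _))
      intro u hu z
      rcases hu with h | h
      · rw [h]; exact hal z
      · rw [Set.eq_of_mem_singleton h]; rfl
    obtain ⟨⟨u, hu⟩, hux⟩ := htr dA (dIota x0)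
    have h1 := invariant_transfer _ F hkey u hu dA
    rw [show u dA = dIota x0 from hux] at h1
    have h2 : (dIota x0).1 = (0 : Fin (n+1)) := cast h1.symm rfl
    have h3 : (x0.1).succ = (0 : Fin (n+1)) := h2
    exact Fin.succ_ne_zero _ h3
  exact Nat.card_of_isEmpty

end DilatonAux


/-- Dilaton-type relation for map counts:
`Map_g(2, i₁, …, iₙ) = (i₁ + ⋯ + iₙ) Map_g(i₁, …, iₙ) + δ_{g,0} δ_{n,0}`. -/
theorem mapCount_dilaton (g n : ℕ) (i : Fin n → ℕ) (hi : ∀ a, 1 ≤ i a) :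
    mapCount g (n + 1) (Fin.cons 2 i) =
      (∑ a, i a) * mapCount g n i + (if g = 0 ∧ n = 0 then 1 else 0) := by
  classical
  rw [DilatonAux.mapCount_eq g (n+1) (Fin.cons 2 i), DilatonAux.mapCount_eq g n i]
  rw [DilatonAux.card_split (DilatonAux.Pred g)
    (fun al' => al' DilatonAux.dA = DilatonAux.dB)]
  have hA : Nat.card {al' : Equiv.Perm (Darts (n+1) (Fin.cons 2 i)) //
      DilatonAux.Pred g al' ∧ al' DilatonAux.dA = DilatonAux.dB}
      = if g = 0 ∧ n = 0 then 1 else 0 := by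
    by_cases hn : n = 0
    · subst hn
      rw [DilatonAux.cardA0 g i]
      simp
    · rw [DilatonAux.cardA_pos g hn hi]
      simp [hn]
  have hB : Nat.card {al' : Equiv.Perm (Darts (n+1) (Fin.cons 2 i)) //
      DilatonAux.Pred g al' ∧ ¬ al' DilatonAux.dA = DilatonAux.dB}
      = (∑ a, i a) * Nat.card {al : Equiv.Perm (Darts n i) // DilatonAux.Pred g al} := by
    rw [DilatonAux.cardB g, Nat.card_prod]
    congr 1
    rw [Nat.card_eq_fintype_card, Fintype.card_sigma]
    simp
  rw [hA, hB]
  exact Nat.add_comm _ _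
end
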